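/- arXiv:1504.01242 — 2 statements merged into one kernel-verified Lean document; each statement's English description precedes it below -/
import Mathlib

section
/- Let C: f = 0 be a free divisor of degree d which is not a pencil of lines, with exponents d_1 ≤ d_2. Then τ(C) = m(f_s)_{d + d_2 − 3} + binom(d_2 − d_1, 2). -/
open MvPolynomial

noncomputable section

/-- The polynomial ring `S = ℂ[x,y,z]`. -/
abbrev S3 : Type := MvPolynomial (Fin 3) ℂ

/-- The Jacobian ideal of `f`, generated by the three partial derivatives. -/
def jacobianIdeal (f : S3) : Ideal S3 :=
  Ideal.span {pderiv 0 f, pderiv 1 f, pderiv 2 f}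

/-- The dimension `m(f)_k` of the degree `k` homogeneous component of the
Milnor algebra `M(f) = S/J_f`. -/
def milnorDim (f : S3) (k : ℕ) : ℕ :=
  Module.finrank ℂ (Submodule.map (Ideal.Quotient.mkₐ ℂ (jacobianIdeal f)).toLinearMap
    (homogeneousSubmodule (Fin 3) ℂ k))

/-- The `S`-linear map `(a,b,c) ↦ a f_x + b f_y + c f_z`. -/
def relMap (f : S3) : (Fin 3 → S3) →ₗ[S3] S3 where
  toFun ρ := ∑ i, ρ i * pderiv i f
  map_add' a b := by simp [add_mul, Finset.sum_add_distrib]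
  map_smul' c a := by simp [Finset.mul_sum, mul_assoc]

/-- The module `AR(f)` of all relations among the partial derivatives of `f`. -/
def AR (f : S3) : Submodule S3 (Fin 3 → S3) := LinearMap.ker (relMap f)

/-- The degree `m` graded piece `AR(f)_m`, as a `ℂ`-subspace of `S³`. -/
def ARgr (f : S3) (m : ℕ) : Submodule ℂ (Fin 3 → S3) :=
  (LinearMap.ker ((relMap f).restrictScalars ℂ)) ⊓
    Submodule.pi Set.univ (fun _ => homogeneousSubmodule (Fin 3) ℂ m)

/-- `ar(f)_m = dim_ℂ AR(f)_m`. -/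
def arDim (f : S3) (m : ℕ) : ℕ := Module.finrank ℂ (ARgr f m)

/-- A vector of polynomials is homogeneous of degree `m` if all components are. -/
def IsHomogVec (ρ : Fin 3 → S3) (m : ℕ) : Prop := ∀ i, (ρ i).IsHomogeneous m

/-- `C : f = 0` is a free divisor with exponents `d₁, d₂` if `AR(f)` is a free
`S`-module with a homogeneous basis in degrees `d₁` and `d₂`. -/
def IsFreeDivisorWith (f : S3) (d₁ d₂ : ℕ) : Prop :=
  ∃ b : Module.Basis (Fin 2) S3 (AR f),
    IsHomogVec (↑(b 0)) d₁ ∧ IsHomogVec (↑(b 1)) d₂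

/-- `C : f = 0` is a free divisor if `AR(f)` is a free graded `S`-module of rank two. -/
def IsFreeDivisor (f : S3) : Prop := ∃ d₁ d₂ : ℕ, IsFreeDivisorWith f d₁ d₂

/-- `binom(a, 2)` for an integer `a`, zero when `a < 2`. -/
def chooseTwo (a : ℤ) : ℤ := (a.toNat).choose 2

/-- The Hilbert function `m(f_s)_k` of the Milnor algebra of a smooth plane curve
of degree `d`. -/
def smoothMilnorDim (d : ℕ) (k : ℤ) : ℤ :=
  chooseTwo (k + 2) - 3 * chooseTwo (k - d + 3) + 3 * chooseTwo (k - 2 * d + 4)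
    - chooseTwo (k - 3 * d + 5)

/-- `m(f)_k` extended to integer indices by zero. -/
def milnorDimZ (f : S3) (k : ℤ) : ℤ := if k < 0 then 0 else milnorDim f k.toNat

/-- `ar(f)_m` extended to integer indices by zero. -/
def arDimZ (f : S3) (m : ℤ) : ℤ := if m < 0 then 0 else arDim f m.toNat

/-- The coincidence threshold `ct(f)`. -/
def ctf (f : S3) (d : ℕ) : ℕ :=
  sSup {q : ℕ | ∀ k ≤ q, (milnorDim f k : ℤ) = smoothMilnorDim d k}

/-- The stability threshold `st(f)`. -/
def stf (f : S3) (τ : ℕ) : ℕ := sInf {q : ℕ | ∀ k ≥ q, milnorDim f k = τ}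

/-- `mdr(f)`, the minimal degree of a syzygy. -/
def mdr (f : S3) : ℕ := sInf {q : ℕ | ARgr f q ≠ ⊥}

/-- The irrelevant maximal ideal `(x,y,z)`. -/
def maxIdeal3 : Ideal S3 := Ideal.span {X 0, X 1, X 2}

/-- The saturation `I_f` of the Jacobian ideal with respect to `(x,y,z)`. -/
def satJacobian (f : S3) : Ideal S3 := ⨆ n : ℕ, (jacobianIdeal f).colon ((maxIdeal3 ^ n : Ideal S3) : Set S3)

/-!
The degree pieces of the exact sequence `0 → AR(f)_j → S_j³ → S_{j+d-1} → M(f)_{j+d-1} → 0`,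
whose middle map is `(a, b, c) ↦ a f_x + b f_y + c f_z`, give
`m(f)_{j+d-1} = binom(j+d+1, 2) - 3 binom(j+2, 2) + ar(f)_j`, and a homogeneous basis of `AR(f)`
in degrees `d₁, d₂` gives `ar(f)_j = binom(j-d₁+2, 2) + binom(j-d₂+2, 2)` for `j ≥ d₂`. So for
large `j` the Milnor numbers are a quadratic polynomial in `j`; as they are eventually the
constant `τ`, the linear coefficient forces `d - 1 = d₁ + d₂` and the constant term gives
`τ = (d - 1)² - d₁ d₂`, which is the binomial expression of the statement.
-/

open Module

namespace MvPolynomial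

variable {σ R : Type*}

section CommSemiring

variable [CommSemiring R]

attribute [local instance] gradedAlgebra

theorem homogeneousComponent_add_mul_of_isHomogeneous {a : MvPolynomial σ R} {n : ℕ}
    (ha : a.IsHomogeneous n) (p : MvPolynomial σ R) (i : ℕ) :
    homogeneousComponent (i + n) (p * a) = homogeneousComponent i p * a := by
  simpa only [← decomposition.decompose'_apply, DirectSum.Decomposition.decompose'_eq] using
    DirectSum.coe_decompose_mul_add_of_right_mem (homogeneousSubmodule σ R) (a := p) (i := i) ha

theorem exists_isHomogeneous_coeffs_of_mem_span {ι : Type*} [Fintype ι]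
    {v : ι → MvPolynomial σ R} {e : ℕ} (hv : ∀ i, (v i).IsHomogeneous e)
    {g : MvPolynomial σ R} {j : ℕ} (hg : g.IsHomogeneous (j + e))
    (hmem : g ∈ Ideal.span (Set.range v)) :
    ∃ c : ι → MvPolynomial σ R, (∀ i, (c i).IsHomogeneous j) ∧ ∑ i, c i * v i = g := by
  obtain ⟨c, rfl⟩ := Ideal.mem_span_range_iff_exists_fun.mp hmem
  refine ⟨fun i => homogeneousComponent j (c i),
    fun i => homogeneousComponent_isHomogeneous _ _, ?_⟩
  conv_rhs => rw [← homogeneousComponent_eq_self hg, map_sum]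
  simp only [homogeneousComponent_add_mul_of_isHomogeneous (hv _)]

end CommSemiring

theorem finrank_homogeneousSubmodule [CommRing R] [Nontrivial R] [Fintype σ] (n : ℕ) :
    finrank R (homogeneousSubmodule σ R n) = (Fintype.card σ).multichoose n := by
  classical
  rw [homogeneousSubmodule_eq_finsupp_supported, ← restrictSupport,
    finrank_eq_nat_card_basis (basisRestrictSupport R {d : σ →₀ ℕ | d.degree = n}),
    ← Sym.card_sym_eq_multichoose, ← Nat.card_eq_fintype_card]
  exact Nat.card_congr ((Sym.equivNatSum σ n).trans (Equiv.subtypeEquivRight fun _ => Iff.rfl)).symm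

instance [CommSemiring R] [Finite σ] (n : ℕ) : Module.Finite R (homogeneousSubmodule σ R n) :=
  Module.Finite.iff_fg.mpr (homogeneousSubmodule_fg σ R n)

end MvPolynomial

namespace Submodule

variable {R M : Type*} [Semiring R] [AddCommMonoid M] [Module R M]

def piUnivConstEquiv (p : Submodule R M) (ι : Type*) :
    (ι → p) ≃ₗ[R] pi Set.univ fun _ : ι => p :=
  (LinearEquiv.ofInjective (p.subtype.compLeft ι) p.injective_subtype.comp_left).trans
    (LinearEquiv.ofEq _ _ (by rw [LinearMap.range_compLeft, range_subtype]))

instance {ι : Type*} [Finite ι] (p : Submodule R M) [Module.Finite R p] :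
    Module.Finite R (pi Set.univ fun _ : ι => p) :=
  Module.Finite.equiv (p.piUnivConstEquiv ι)

theorem finrank_pi_univ_const {K V ι : Type*} [DivisionRing K] [AddCommGroup V] [Module K V]
    [Fintype ι] (p : Submodule K V) [FiniteDimensional K p] :
    finrank K (pi Set.univ fun _ : ι => p) = Fintype.card ι * finrank K p := by
  rw [← (p.piUnivConstEquiv ι).finrank_eq, Module.finrank_pi_fintype, Finset.sum_const,
    Finset.card_univ, smul_eq_mul]

theorem finrank_map_add_finrank_ker_inf {K V W : Type*} [DivisionRing K]
    [AddCommGroup V] [Module K V] [AddCommGroup W] [Module K W] (φ : V →ₗ[K] W)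
    (U : Submodule K V) [FiniteDimensional K U] :
    finrank K (U.map φ) + finrank K ↥(LinearMap.ker φ ⊓ U) = finrank K U := by
  rw [← (φ.domRestrict U).finrank_range_add_finrank_ker, LinearMap.range_domRestrict,
    LinearMap.ker_domRestrict, inf_comm, ← Submodule.map_comap_subtype,
    ← (Submodule.equivMapOfInjective _ U.injective_subtype _).finrank_eq]

end Submodule

theorem finrank_homogeneousSubmodule_fin_three (k : ℕ) :
    finrank ℂ (homogeneousSubmodule (Fin 3) ℂ k) = (k + 2).choose 2 := by
  rw [finrank_homogeneousSubmodule, Fintype.card_fin, Nat.multichoose_eq,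
    show 3 + k - 1 = k + 2 by omega, Nat.choose_symm_add]

theorem milnorDim_add_finrank_jacobianIdeal_inf (f : S3) (k : ℕ) :
    milnorDim f k + finrank ℂ ↥((jacobianIdeal f).restrictScalars ℂ ⊓
      homogeneousSubmodule (Fin 3) ℂ k) = (k + 2).choose 2 := by
  have hker : LinearMap.ker (Ideal.Quotient.mkₐ ℂ (jacobianIdeal f)).toLinearMap =
      (jacobianIdeal f).restrictScalars ℂ := by
    ext; simp [Ideal.Quotient.eq_zero_iff_mem]
  rw [← finrank_homogeneousSubmodule_fin_three, ← hker, milnorDim]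
  exact Submodule.finrank_map_add_finrank_ker_inf _ _

theorem map_relMap_pi_homogeneousSubmodule {f : S3} {e : ℕ}
    (hpd : ∀ i, (pderiv i f).IsHomogeneous e) (j : ℕ) :
    (Submodule.pi Set.univ fun _ => homogeneousSubmodule (Fin 3) ℂ j).map
        ((relMap f).restrictScalars ℂ) =
      (jacobianIdeal f).restrictScalars ℂ ⊓ homogeneousSubmodule (Fin 3) ℂ (j + e) := by
  have hJ : jacobianIdeal f = Ideal.span (Set.range fun i => pderiv i f) := by
    rw [jacobianIdeal]
    congr 1
    ext
    simp [Fin.exists_fin_succ, eq_comm]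
  apply le_antisymm
  · rintro _ ⟨ρ, hρ, rfl⟩
    refine ⟨?_, ?_⟩
    · rw [SetLike.mem_coe, Submodule.restrictScalars_mem, hJ]
      exact Ideal.mem_span_range_iff_exists_fun.mpr ⟨ρ, rfl⟩
    · exact IsHomogeneous.sum _ _ _ fun i _ => (hρ i trivial).mul (hpd i)
  · rintro g ⟨hgJ, hg⟩
    rw [SetLike.mem_coe, Submodule.restrictScalars_mem, hJ] at hgJ
    obtain ⟨c, hc, rfl⟩ := exists_isHomogeneous_coeffs_of_mem_span hpd hg hgJ
    exact ⟨c, fun i _ => hc i, rfl⟩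

theorem milnorDim_add_three_mul_choose_two_eq_add_arDim {f : S3} {e : ℕ}
    (hpd : ∀ i, (pderiv i f).IsHomogeneous e) (j : ℕ) :
    milnorDim f (j + e) + 3 * (j + 2).choose 2 = (j + e + 2).choose 2 + arDim f j := by
  have hM := milnorDim_add_finrank_jacobianIdeal_inf f (j + e)
  have hA := Submodule.finrank_map_add_finrank_ker_inf ((relMap f).restrictScalars ℂ)
    (Submodule.pi Set.univ fun _ : Fin 3 => homogeneousSubmodule (Fin 3) ℂ j)
  rw [map_relMap_pi_homogeneousSubmodule hpd, Submodule.finrank_pi_univ_const,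
    finrank_homogeneousSubmodule_fin_three, Fintype.card_fin] at hA
  change _ + arDim f j = _ at hA
  omega

section FreeDivisor

variable {f : S3}

theorem injective_smulRight_coprod (b : Module.Basis (Fin 2) S3 (AR f)) (p q : Submodule ℂ S3) :
    Function.Injective ((p.subtype.smulRight (b 0 : Fin 3 → S3)).coprod
      (q.subtype.smulRight (b 1 : Fin 3 → S3))) := by
  rw [injective_iff_map_eq_zero]
  rintro ⟨x, y⟩ h
  have hli : LinearIndependent S3 ![b 0, b 1] := by
    convert b.linearIndependent
    ext i
    fin_cases i <;> rfl
  obtain ⟨hx, hy⟩ := LinearIndependent.pair_iff.mp hli (x : S3) (y : S3) (Subtype.ext h)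
  ext <;> simp [hx, hy]

theorem range_smulRight_coprod_eq_ARgr (b : Module.Basis (Fin 2) S3 (AR f)) {d₁ d₂ m : ℕ}
    (hb₀ : IsHomogVec (b 0) d₁) (hb₁ : IsHomogVec (b 1) d₂) (h₁ : d₁ ≤ m) (h₂ : d₂ ≤ m) :
    LinearMap.range
        (((homogeneousSubmodule (Fin 3) ℂ (m - d₁)).subtype.smulRight (b 0 : Fin 3 → S3)).coprod
          ((homogeneousSubmodule (Fin 3) ℂ (m - d₂)).subtype.smulRight (b 1 : Fin 3 → S3))) =
      ARgr f m := by
  have hdeg₀ := Nat.sub_add_cancel h₁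
  have hdeg₁ := Nat.sub_add_cancel h₂
  apply le_antisymm
  · rintro _ ⟨⟨p, q⟩, rfl⟩
    refine ⟨?_, fun i _ => ?_⟩
    · change relMap f ((p : S3) • (b 0 : Fin 3 → S3) + (q : S3) • (b 1 : Fin 3 → S3)) = 0
      rw [map_add, map_smul, map_smul, LinearMap.mem_ker.mp (b 0).2,
        LinearMap.mem_ker.mp (b 1).2, smul_zero, smul_zero, add_zero]
    · have hp := p.2.mul (hb₀ i)
      have hq := q.2.mul (hb₁ i)
      rw [hdeg₀] at hp
      rw [hdeg₁] at hq
      exact hp.add hq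
  · rintro ρ ⟨hker, hhom⟩
    set r := b.repr ⟨ρ, hker⟩
    have hρ : ∀ i, ρ i = r 0 * (b 0 : Fin 3 → S3) i + r 1 * (b 1 : Fin 3 → S3) i := fun i => by
      have h := congrArg (fun x : AR f => (x : Fin 3 → S3) i) (b.sum_repr ⟨ρ, hker⟩)
      simp only [Fin.sum_univ_two, Submodule.coe_add, Submodule.coe_smul, Pi.add_apply,
        Pi.smul_apply, smul_eq_mul] at h
      exact h.symm
    refine ⟨⟨⟨homogeneousComponent (m - d₁) (r 0), homogeneousComponent_mem _ _⟩,
      ⟨homogeneousComponent (m - d₂) (r 1), homogeneousComponent_mem _ _⟩⟩, funext fun i => ?_⟩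
    calc homogeneousComponent (m - d₁) (r 0) * (b 0 : Fin 3 → S3) i
          + homogeneousComponent (m - d₂) (r 1) * (b 1 : Fin 3 → S3) i
        = homogeneousComponent m (ρ i) := by
          rw [hρ i, map_add, ← homogeneousComponent_add_mul_of_isHomogeneous (hb₀ i),
            ← homogeneousComponent_add_mul_of_isHomogeneous (hb₁ i), hdeg₀, hdeg₁]
      _ = ρ i := homogeneousComponent_eq_self (hhom i trivial)

theorem arDim_of_isFreeDivisorWith {d₁ d₂ m : ℕ} (hfree : IsFreeDivisorWith f d₁ d₂)
    (h₁ : d₁ ≤ m) (h₂ : d₂ ≤ m) :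
    arDim f m = (m - d₁ + 2).choose 2 + (m - d₂ + 2).choose 2 := by
  obtain ⟨b, hb₀, hb₁⟩ := hfree
  rw [arDim, ← range_smulRight_coprod_eq_ARgr b hb₀ hb₁ h₁ h₂,
    LinearMap.finrank_range_of_inj (injective_smulRight_coprod b _ _), Module.finrank_prod,
    finrank_homogeneousSubmodule_fin_three, finrank_homogeneousSubmodule_fin_three]

end FreeDivisor

theorem two_mul_cast_choose_two (n : ℕ) : 2 * (n.choose 2 : ℤ) = n * (n - 1) := by
  have h : 2 * (n.choose 2 : ℚ) = n * (n - 1) := by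
    rw [Nat.cast_choose_two]
    ring
  exact_mod_cast h

theorem two_mul_chooseTwo {a : ℤ} (ha : 0 ≤ a) : 2 * chooseTwo a = a * (a - 1) := by
  lift a to ℕ using ha
  exact two_mul_cast_choose_two a

theorem chooseTwo_of_le_one {a : ℤ} (ha : a ≤ 1) : chooseTwo a = 0 := by
  rw [chooseTwo, Nat.choose_eq_zero_of_lt (by omega), Nat.cast_zero]

theorem two_mul_milnorDim_of_isFreeDivisorWith {f : S3} {e d₁ d₂ j : ℕ}
    (hpd : ∀ i, (pderiv i f).IsHomogeneous e) (hfree : IsFreeDivisorWith f d₁ d₂)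
    (h₁ : d₁ ≤ j) (h₂ : d₂ ≤ j) :
    2 * (milnorDim f (j + e) : ℤ) = (j + e + 2) * (j + e + 1) + (j - d₁ + 2) * (j - d₁ + 1)
      + (j - d₂ + 2) * (j - d₂ + 1) - 3 * ((j + 2) * (j + 1)) := by
  have h := milnorDim_add_three_mul_choose_two_eq_add_arDim hpd j
  rw [arDim_of_isFreeDivisorWith hfree h₁ h₂] at h
  have hz : (milnorDim f (j + e) : ℤ) + 3 * ((j + 2).choose 2 : ℕ) =
      ((j + e + 2).choose 2 : ℕ) + (((j - d₁ + 2).choose 2 : ℕ) + ((j - d₂ + 2).choose 2 : ℕ)) := by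
    exact_mod_cast h
  have c₀ := two_mul_cast_choose_two (j + 2)
  have c₁ := two_mul_cast_choose_two (j + e + 2)
  have c₂ := two_mul_cast_choose_two (j - d₁ + 2)
  have c₃ := two_mul_cast_choose_two (j - d₂ + 2)
  push_cast [Nat.cast_sub h₁, Nat.cast_sub h₂] at c₀ c₁ c₂ c₃ hz
  linear_combination 2 * hz - 3 * c₀ + c₁ + c₂ + c₃

theorem tjurina_of_isFreeDivisorWith {f : S3} {e d₁ d₂ τ : ℕ}
    (hpd : ∀ i, (pderiv i f).IsHomogeneous e) (hfree : IsFreeDivisorWith f d₁ d₂)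
    (hτ : ∃ N : ℕ, ∀ k ≥ N, milnorDim f k = τ) :
    e = d₁ + d₂ ∧ (τ : ℤ) = (d₁ + d₂) ^ 2 - d₁ * d₂ := by
  obtain ⟨N, hN⟩ := hτ
  have h₀ := two_mul_milnorDim_of_isFreeDivisorWith (j := N + d₁ + d₂) hpd hfree
    (by omega) (by omega)
  have h₁ := two_mul_milnorDim_of_isFreeDivisorWith (j := N + d₁ + d₂ + 1) hpd hfree
    (by omega) (by omega)
  rw [hN _ (by omega)] at h₀ h₁
  push_cast at h₀ h₁
  have he : 2 * (e : ℤ) = 2 * (d₁ + d₂) := by linear_combination h₀ - h₁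
  obtain rfl : e = d₁ + d₂ := by omega
  refine ⟨rfl, ?_⟩
  push_cast at h₀
  linarith

theorem smoothMilnorDim_add_chooseTwo {d₁ d₂ : ℕ} (h : d₁ ≤ d₂) :
    smoothMilnorDim (d₁ + d₂ + 1) (((d₁ + d₂ + 1 : ℕ) : ℤ) + d₂ - 3) + chooseTwo ((d₂ : ℤ) - d₁) =
      (d₁ + d₂) ^ 2 - d₁ * d₂ := by
  have e₁ : (d₁ + d₂ + 1 + d₂ - 3 + 2 : ℤ) = d₁ + 2 * d₂ := by ring
  have e₂ : (d₁ + d₂ + 1 + d₂ - 3 - (d₁ + d₂ + 1) + 3 : ℤ) = d₂ := by ring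
  have e₃ : (d₁ + d₂ + 1 + d₂ - 3 - 2 * (d₁ + d₂ + 1) + 4 : ℤ) ≤ 1 := by omega
  have e₄ : (d₁ + d₂ + 1 + d₂ - 3 - 3 * (d₁ + d₂ + 1) + 5 : ℤ) ≤ 1 := by omega
  rw [smoothMilnorDim]
  push_cast
  rw [e₁, e₂, chooseTwo_of_le_one e₃, chooseTwo_of_le_one e₄]
  have c₁ := two_mul_chooseTwo (a := d₁ + 2 * d₂) (by positivity)
  have c₂ := two_mul_chooseTwo (a := d₂) (by positivity)
  have c₃ := two_mul_chooseTwo (a := d₂ - d₁) (by omega)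
  linarith

theorem stmt7_general (f : S3) (d : ℕ) (hf : f.IsHomogeneous d)
    (d₁ d₂ : ℕ) (hfree : IsFreeDivisorWith f d₁ d₂) (h12 : d₁ ≤ d₂) (hpencil : 1 ≤ d₁)
    (τ : ℕ) (hτ : ∃ N : ℕ, ∀ k ≥ N, milnorDim f k = τ) :
    (τ : ℤ) = smoothMilnorDim d ((d : ℤ) + d₂ - 3) + chooseTwo ((d₂ : ℤ) - d₁) := by
  obtain ⟨he, hτ⟩ := tjurina_of_isFreeDivisorWith (fun _ => hf.pderiv) hfree hτ
  obtain rfl : d = d₁ + d₂ + 1 := by omega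
  rw [hτ, smoothMilnorDim_add_chooseTwo h12]

theorem stmt7 (f : S3) (d : ℕ) (hf : f.IsHomogeneous d) (hred : Squarefree f)
    (d₁ d₂ : ℕ) (hfree : IsFreeDivisorWith f d₁ d₂) (h12 : d₁ ≤ d₂) (hpencil : 1 ≤ d₁)
    (τ : ℕ) (hτ : ∃ N : ℕ, ∀ k ≥ N, milnorDim f k = τ) :
    (τ : ℤ) = smoothMilnorDim d ((d : ℤ) + d₂ - 3) + chooseTwo ((d₂ : ℤ) - d₁) :=
  stmt7_general f d hf d₁ d₂ hfree h12 hpencil τ hτ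

end
end

section
/- For every integer k ≥ 2, the curve C_{2k+1}: f = 0 with f = (y^{k−1}z + x^k)²·y − x^{2k+1} ∈ ℂ[x,y,z] has total Tjurina number τ(C_{2k+1}) = 3k²; that is, m(f)_m = 3k² for all sufficiently large m. -/
/-!
The curve is free with exponents `(k, k)`. Two explicit syzygies `u, v` of degree `k` satisfy
`det (u, v, E) = (4k + 2) f` for the Euler vector `E = (x, y, z)`, and `f` is prime to `f_z`;
Saito's criterion then makes `u, v` a basis of `AR(f)`: by Cramer's rule every syzygy `r`
satisfies `det (u, v, E) • r = det (r, v, E) • u + det (u, r, E) • v`, and both coefficients are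
divisible by `f`, since `f_z · det (a, b, E) = deg f · f · (a₀ b₁ - a₁ b₀)` for syzygies `a, b`.
Hence `AR(f)_e ≅ S_{e-k}²`, and the exact sequence
`0 → AR(f)_e → S_e³ → S_{e+2k} → M(f)_{e+2k} → 0` gives, for `m ≥ 3k`,
`m(f)_m = dim S_m - 3 dim S_{m-2k} + 2 dim S_{m-3k} = 3k²`.
-/

open MvPolynomial

noncomputable section

theorem Submodule.finrank_map_add_finrank_inf_ker {K V W : Type*} [DivisionRing K]
    [AddCommGroup V] [Module K V] [AddCommGroup W] [Module K W]
    (g : V →ₗ[K] W) (P : Submodule K V) [FiniteDimensional K P] :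
    Module.finrank K (P.map g) + Module.finrank K ↥(LinearMap.ker g ⊓ P) =
      Module.finrank K P := by
  have hker : LinearMap.ker (g.domRestrict P) = (LinearMap.ker g ⊓ P).comap P.subtype := by
    rw [LinearMap.ker_domRestrict, Submodule.comap_inf, Submodule.comap_subtype_self, inf_top_eq]
  rw [← (g.domRestrict P).finrank_range_add_finrank_ker, LinearMap.range_domRestrict, hker,
    (Submodule.comapSubtypeEquivOfLe inf_le_right).finrank_eq]

theorem Submodule.pi_univ_const_eq_range {R V ι : Type*} [Semiring R] [AddCommMonoid V]
    [Module R V] (P : Submodule R V) :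
    (Submodule.pi Set.univ fun _ : ι => P) = LinearMap.range (P.subtype.compLeft ι) := by
  rw [LinearMap.range_compLeft, Submodule.range_subtype]

instance Submodule.finiteDimensional_pi_univ_const {K V ι : Type*} [DivisionRing K]
    [AddCommGroup V] [Module K V] [Finite ι] (P : Submodule K V) [FiniteDimensional K P] :
    FiniteDimensional K (Submodule.pi Set.univ fun _ : ι => P) :=
  P.pi_univ_const_eq_range ▸ LinearMap.finiteDimensional_range _

theorem Submodule.finrank_pi_univ_const_s15 {K V ι : Type*} [DivisionRing K] [AddCommGroup V]
    [Module K V] [Fintype ι] (P : Submodule K V) [FiniteDimensional K P] :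
    Module.finrank K (Submodule.pi Set.univ fun _ : ι => P) =
      Fintype.card ι * Module.finrank K P := by
  have hinj : Function.Injective (P.subtype.compLeft ι) :=
    fun _ _ h => funext fun i => Subtype.ext (congr_fun h i)
  rw [P.pi_univ_const_eq_range, LinearMap.finrank_range_of_inj hinj, Module.finrank_pi_fintype]
  simp

theorem IsRelPrime.sub_left_of_dvd {R : Type*} [CommRing R] {a b c : R} (h : IsRelPrime a b)
    (hc : b ∣ c) : IsRelPrime (c - a) b := by
  obtain ⟨z, rfl⟩ := hc
  refine IsRelPrime.of_add_mul_left_left (z := -z) ?_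
  rw [show b * z - a + b * -z = -a by ring]
  exact h.neg_left

theorem Matrix.det_smul_eq_cramer_fin_three {R : Type*} [CommRing R] (u v w r : Fin 3 → R) :
    (Matrix.of ![u, v, w]).det • r = (Matrix.of ![r, v, w]).det • u +
      (Matrix.of ![u, r, w]).det • v + (Matrix.of ![u, v, r]).det • w := by
  funext i
  fin_cases i <;> simp [Matrix.det_fin_three] <;> ring

namespace MvPolynomial

theorem homogeneousComponent_mul_of_isHomogeneous {σ R : Type*} [CommSemiring R]
    {q : MvPolynomial σ R} {j : ℕ} (hq : q.IsHomogeneous j) (n : ℕ) (p : MvPolynomial σ R) :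
    homogeneousComponent (n + j) (p * q) = homogeneousComponent n p * q := by
  let _ := MvPolynomial.gradedAlgebra (σ := σ) (R := R)
  have hdec : ∀ (x : MvPolynomial σ R) i,
      (DirectSum.decompose (homogeneousSubmodule σ R) x i : MvPolynomial σ R) =
        homogeneousComponent i x := decomposition.decompose'_apply
  have := DirectSum.coe_decompose_mul_of_right_mem_of_le (𝒜 := homogeneousSubmodule σ R)
    (a := p) (n := n + j) hq (Nat.le_add_left j n)
  rwa [hdec, hdec, Nat.add_sub_cancel] at this

theorem isRelPrime_X_of_eval_ne_zero {σ K : Type*} [Field K] {i : σ} {p : MvPolynomial σ K}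
    {x : σ → K} (hx : x i = 0) (hp : eval x p ≠ 0) : IsRelPrime (X i) p := by
  refine X_prime.irreducible.isRelPrime_iff_not_dvd.mpr fun ⟨q, hq⟩ => hp ?_
  simp [hq, hx]

variable {σ K : Type*} [Fintype σ] [Field K]

instance (n : ℕ) : FiniteDimensional K (homogeneousSubmodule σ K n) :=
  Module.Finite.iff_fg.mpr (homogeneousSubmodule_fg σ K n)

theorem finrank_homogeneousSubmodule_s15 (n : ℕ) :
    Module.finrank K (homogeneousSubmodule σ K n) = (Fintype.card σ + n - 1).choose n := by
  classical
  have hsupp : homogeneousSubmodule σ K n = AddMonoidAlgebra.supported K K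
      ((Finset.univ : Finset σ).finsuppAntidiag n : Set (σ →₀ ℕ)) := by
    rw [homogeneousSubmodule_eq_finsupp_supported]
    congr 1
    ext d
    simp [Finsupp.degree_eq_sum]
  rw [((LinearEquiv.ofEq _ _ hsupp).trans (AddMonoidAlgebra.supportedEquivFinsupp _)).finrank_eq,
    Module.finrank_finsupp_self]
  simp [Finset.card_finsuppAntidiag_nat_eq_choose]

end MvPolynomial

theorem finrank_homogeneousSubmodule_fin_three_s15 (n : ℕ) :
    (Module.finrank ℂ (homogeneousSubmodule (Fin 3) ℂ n) : ℚ) = (n + 2) * (n + 1) / 2 := by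
  rw [finrank_homogeneousSubmodule_s15, Fintype.card_fin, show 3 + n - 1 = n + 2 by omega,
    Nat.choose_symm_of_eq_add rfl, Nat.cast_choose_two]
  push_cast
  ring

theorem relMap_apply (f : S3) (ρ : Fin 3 → S3) : relMap f ρ = ∑ i, ρ i * pderiv i f := rfl

theorem relMap_X_of_isHomogeneous {f : S3} {d : ℕ} (hf : f.IsHomogeneous d) :
    relMap f X = d * f := by
  rw [relMap_apply, hf.sum_X_mul_pderiv, nsmul_eq_mul]

theorem mem_AR_iff {f : S3} {ρ : Fin 3 → S3} :
    ρ ∈ AR f ↔ ρ 0 * pderiv 0 f + ρ 1 * pderiv 1 f + ρ 2 * pderiv 2 f = 0 := by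
  rw [AR, LinearMap.mem_ker, relMap_apply, Fin.sum_univ_three]

theorem jacobianIdeal_eq_range (f : S3) : jacobianIdeal f = LinearMap.range (relMap f) := by
  have hrange : Set.range (fun i : Fin 3 => pderiv i f) = {pderiv 0 f, pderiv 1 f, pderiv 2 f} := by
    ext; simp [Fin.exists_fin_succ, eq_comm]
  ext x
  rw [jacobianIdeal, ← hrange, Ideal.mem_span_range_iff_exists_fun]
  rfl

theorem milnorDim_add_three_mul_finrank {f : S3} {D : ℕ}
    (hf : ∀ i, (pderiv i f).IsHomogeneous D) (e : ℕ) :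
    milnorDim f (e + D) + 3 * Module.finrank ℂ (homogeneousSubmodule (Fin 3) ℂ e) =
      Module.finrank ℂ (homogeneousSubmodule (Fin 3) ℂ (e + D)) + arDim f e := by
  set P := Submodule.pi Set.univ fun _ : Fin 3 => homogeneousSubmodule (Fin 3) ℂ e
  set T := (Ideal.Quotient.mkₐ ℂ (jacobianIdeal f)).toLinearMap
  have hker : LinearMap.ker T = (jacobianIdeal f).restrictScalars ℂ := by
    ext x; exact Ideal.Quotient.eq_zero_iff_mem
  have himage : P.map ((relMap f).restrictScalars ℂ) =
      LinearMap.ker T ⊓ homogeneousSubmodule (Fin 3) ℂ (e + D) := by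
    rw [hker, jacobianIdeal_eq_range]
    ext x
    constructor
    · rintro ⟨ρ, hρ, rfl⟩
      exact ⟨⟨ρ, rfl⟩, IsHomogeneous.sum _ _ _ fun i _ => (hρ i trivial).mul (hf i)⟩
    · rintro ⟨⟨ρ, rfl⟩, hx⟩
      refine ⟨fun i => homogeneousComponent e (ρ i), fun i _ => homogeneousComponent_mem e _, ?_⟩
      calc ∑ i, homogeneousComponent e (ρ i) * pderiv i f
          = homogeneousComponent (e + D) (∑ i, ρ i * pderiv i f) := by
            simp only [map_sum, homogeneousComponent_mul_of_isHomogeneous (hf _)]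
        _ = ∑ i, ρ i * pderiv i f := homogeneousComponent_eq_self hx
  have hmilnor := Submodule.finrank_map_add_finrank_inf_ker T
    (homogeneousSubmodule (Fin 3) ℂ (e + D))
  have hrel := Submodule.finrank_map_add_finrank_inf_ker ((relMap f).restrictScalars ℂ) P
  rw [himage, Submodule.finrank_pi_univ_const_s15, Fintype.card_fin] at hrel
  change milnorDim f (e + D) + _ = _ at hmilnor
  change _ + arDim f e = _ at hrel
  linarith

theorem isFreeDivisorWith_iff {f : S3} {d₁ d₂ : ℕ} :
    IsFreeDivisorWith f d₁ d₂ ↔ ∃ u v : Fin 3 → S3, u ∈ AR f ∧ v ∈ AR f ∧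
      IsHomogVec u d₁ ∧ IsHomogVec v d₂ ∧
      (∀ A B : S3, A • u + B • v = 0 → A = 0 ∧ B = 0) ∧
      ∀ r ∈ AR f, ∃ A B : S3, r = A • u + B • v := by
  constructor
  · rintro ⟨b, hb₀, hb₁⟩
    refine ⟨b 0, b 1, (b 0).2, (b 1).2, hb₀, hb₁, fun A B hAB => ?_, fun r hr => ?_⟩
    · have hpair : ⇑b = ![b 0, b 1] := by ext1 i; fin_cases i <;> rfl
      have hli : LinearIndependent S3 ![b 0, b 1] := hpair ▸ b.linearIndependent
      exact LinearIndependent.pair_iff.mp hli A B (Subtype.ext (by simpa using hAB))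
    · refine ⟨b.repr ⟨r, hr⟩ 0, b.repr ⟨r, hr⟩ 1, ?_⟩
      have := congrArg Subtype.val (b.sum_repr ⟨r, hr⟩)
      rw [Fin.sum_univ_two] at this
      simpa using this.symm
  · rintro ⟨u, v, hu, hv, hu', hv', hindep, hspan⟩
    have hli : LinearIndependent S3 ![(⟨u, hu⟩ : AR f), ⟨v, hv⟩] :=
      LinearIndependent.pair_iff.mpr fun A B hAB => hindep A B (congrArg Subtype.val hAB)
    have hsp : ⊤ ≤ Submodule.span S3 (Set.range ![(⟨u, hu⟩ : AR f), ⟨v, hv⟩]) := by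
      rintro ⟨r, hr⟩ -
      obtain ⟨A, B, rfl⟩ := hspan r hr
      rw [Matrix.range_cons_cons_empty, Submodule.mem_span_pair]
      exact ⟨A, B, rfl⟩
    exact ⟨Module.Basis.mk hli hsp, by simpa using hu', by simpa using hv'⟩

theorem IsFreeDivisorWith.arDim_eq {f : S3} {d₁ d₂ m : ℕ} (h : IsFreeDivisorWith f d₁ d₂)
    (h₁ : d₁ ≤ m) (h₂ : d₂ ≤ m) :
    arDim f m = Module.finrank ℂ (homogeneousSubmodule (Fin 3) ℂ (m - d₁)) +
      Module.finrank ℂ (homogeneousSubmodule (Fin 3) ℂ (m - d₂)) := by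
  obtain ⟨u, v, hu, hv, hu', hv', hindep, hspan⟩ := isFreeDivisorWith_iff.mp h
  let θ := (LinearMap.smulRight (homogeneousSubmodule (Fin 3) ℂ (m - d₁)).subtype u).coprod
    (LinearMap.smulRight (homogeneousSubmodule (Fin 3) ℂ (m - d₂)).subtype v)
  have hθ : ∀ pq, θ pq = (pq.1 : S3) • u + (pq.2 : S3) • v := fun _ => rfl
  have hinj : Function.Injective θ := by
    rw [← LinearMap.ker_eq_bot, LinearMap.ker_eq_bot']
    rintro ⟨p, q⟩ hpq
    obtain ⟨hp, hq⟩ := hindep _ _ ((hθ _).symm.trans hpq)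
    exact Prod.ext (Subtype.ext hp) (Subtype.ext hq)
  have hcomp : ∀ {d : ℕ} {w : Fin 3 → S3}, IsHomogVec w d → d ≤ m → ∀ A i,
      homogeneousComponent m (A * w i) = homogeneousComponent (m - d) A * w i := by
    intro d w hw hd A i
    rw [← homogeneousComponent_mul_of_isHomogeneous (hw i), Nat.sub_add_cancel hd]
  have hrange : LinearMap.range θ = ARgr f m := by
    apply le_antisymm
    · rintro _ ⟨⟨p, q⟩, rfl⟩
      refine ⟨?_, fun i _ => ?_⟩
      · change relMap f (θ (p, q)) = 0
        rw [hθ, map_add, map_smul, map_smul, LinearMap.mem_ker.mp hu, LinearMap.mem_ker.mp hv,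
          smul_zero, smul_zero, add_zero]
      · have hp := (p.2 : (p : S3).IsHomogeneous (m - d₁)).mul (hu' i)
        have hq := (q.2 : (q : S3).IsHomogeneous (m - d₂)).mul (hv' i)
        rw [Nat.sub_add_cancel h₁] at hp
        rw [Nat.sub_add_cancel h₂] at hq
        exact hp.add hq
    · rintro r ⟨hr, hhom⟩
      obtain ⟨A, B, rfl⟩ := hspan r hr
      refine ⟨(⟨_, homogeneousComponent_mem (m - d₁) A⟩, ⟨_, homogeneousComponent_mem (m - d₂) B⟩),
        funext fun i => ?_⟩
      rw [hθ, ← homogeneousComponent_eq_self (hhom i trivial)]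
      simp only [Pi.add_apply, Pi.smul_apply, smul_eq_mul, map_add, hcomp hu' h₁, hcomp hv' h₂]
  rw [arDim, ← hrange, LinearMap.finrank_range_of_inj hinj, Module.finrank_prod]

theorem IsFreeDivisorWith.milnorDim_eq {f : S3} {d₁ d₂ m : ℕ}
    (hf : f.IsHomogeneous (d₁ + d₂ + 1)) (h : IsFreeDivisorWith f d₁ d₂)
    (hm₁ : 2 * d₁ + d₂ ≤ m) (hm₂ : d₁ + 2 * d₂ ≤ m) :
    milnorDim f m = d₁ ^ 2 + d₁ * d₂ + d₂ ^ 2 := by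
  obtain ⟨e, rfl⟩ : ∃ e, m = e + (d₁ + d₂) := ⟨m - (d₁ + d₂), by omega⟩
  have hA := milnorDim_add_three_mul_finrank (fun i => hf.pderiv (i := i)) e
  have hB := h.arDim_eq (m := e) (by omega) (by omega)
  qify at hA hB ⊢
  simp only [finrank_homogeneousSubmodule_fin_three_s15, Nat.cast_sub (show d₁ ≤ e by omega),
    Nat.cast_sub (show d₂ ≤ e by omega), Nat.add_sub_cancel] at hA hB
  push_cast at hA hB
  linear_combination hA + hB

section Saito

variable {f c : S3} {d : ℕ} {u v : Fin 3 → S3}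

-- The cross product `u × v` of two syzygies is proportional to `∇f`.
theorem pderiv_two_mul_det (hu : u ∈ AR f) (hv : v ∈ AR f) (w : Fin 3 → S3) :
    pderiv 2 f * (Matrix.of ![u, v, w]).det = relMap f w * (u 0 * v 1 - u 1 * v 0) := by
  rw [mem_AR_iff] at hu hv
  rw [Matrix.det_fin_three, relMap_apply, Fin.sum_univ_three]
  simp only [Matrix.of_apply, Matrix.cons_val_zero, Matrix.cons_val_one, Matrix.cons_val_two,
    Matrix.tail_cons, Matrix.head_cons]
  linear_combination (w 0 * u 1 - w 1 * u 0) * hv + (w 1 * v 0 - w 0 * v 1) * hu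

theorem exists_eq_smul_add_smul_of_det (hf : f.IsHomogeneous d) (hf₀ : f ≠ 0)
    (hcop : IsRelPrime f (pderiv 2 f)) (hz : pderiv 2 f ≠ 0) (hu : u ∈ AR f) (hv : v ∈ AR f)
    (hc : IsUnit c) (hdet : (Matrix.of ![u, v, X]).det = c * f) {r : Fin 3 → S3}
    (hr : r ∈ AR f) : ∃ A B : S3, r = A • u + B • v := by
  have hdvd : ∀ {a b : Fin 3 → S3}, a ∈ AR f → b ∈ AR f → f ∣ (Matrix.of ![a, b, X]).det := by
    intro a b ha hb
    refine hcop.dvd_of_dvd_mul_left ⟨d * (a 0 * b 1 - a 1 * b 0), ?_⟩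
    rw [pderiv_two_mul_det ha hb, relMap_X_of_isHomogeneous hf]
    ring
  obtain ⟨A, hA⟩ := hdvd hr hv
  obtain ⟨B, hB⟩ := hdvd hu hr
  have hG : (Matrix.of ![u, v, r]).det = 0 := by
    have := pderiv_two_mul_det hu hv r
    rw [LinearMap.mem_ker.mp hr, zero_mul] at this
    exact (mul_eq_zero.mp this).resolve_left hz
  have hcramer := Matrix.det_smul_eq_cramer_fin_three u v X r
  rw [hdet, hA, hB, hG, zero_smul, add_zero, mul_comm c, mul_smul, mul_smul, mul_smul,
    ← smul_add] at hcramer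
  obtain ⟨c, rfl⟩ := hc
  refine ⟨↑c⁻¹ * A, ↑c⁻¹ * B, ?_⟩
  rw [mul_smul, mul_smul, ← smul_add, ← smul_right_injective _ hf₀ hcramer, smul_smul,
    Units.inv_mul, one_smul]

-- Saito's criterion.
theorem isFreeDivisorWith_of_det {d₁ d₂ : ℕ} (hf : f.IsHomogeneous d) (hf₀ : f ≠ 0)
    (hcop : IsRelPrime f (pderiv 2 f)) (hz : pderiv 2 f ≠ 0) (hu : u ∈ AR f) (hv : v ∈ AR f)
    (hu' : IsHomogVec u d₁) (hv' : IsHomogVec v d₂) (hc : IsUnit c)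
    (hdet : (Matrix.of ![u, v, X]).det = c * f) : IsFreeDivisorWith f d₁ d₂ := by
  have hdet₀ : (Matrix.of ![u, v, X]).det ≠ 0 := hdet ▸ mul_ne_zero hc.ne_zero hf₀
  refine isFreeDivisorWith_iff.mpr ⟨u, v, hu, hv, hu', hv', fun A B hAB => ?_,
    fun r hr => exists_eq_smul_add_smul_of_det hf hf₀ hcop hz hu hv hc hdet hr⟩
  have h₁ : (Matrix.of ![A • u + B • v, v, X]).det = A * (Matrix.of ![u, v, X]).det := by
    simp [Matrix.det_fin_three]; ring
  have h₂ : (Matrix.of ![u, A • u + B • v, X]).det = B * (Matrix.of ![u, v, X]).det := by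
    simp [Matrix.det_fin_three]; ring
  rw [hAB, Matrix.det_eq_zero_of_row_eq_zero 0 fun _ => rfl] at h₁
  rw [hAB, Matrix.det_eq_zero_of_row_eq_zero 1 fun _ => rfl] at h₂
  exact ⟨(mul_eq_zero.mp h₁.symm).resolve_right hdet₀, (mul_eq_zero.mp h₂.symm).resolve_right hdet₀⟩

end Saito

-- The curve of the theorem for `k = n + 2`; indexing by `n` keeps truncated subtraction out of
-- the exponents.
namespace CurveC

def g (n : ℕ) : S3 := X 1 ^ (n + 1) * X 2 + X 0 ^ (n + 2)

def F (n : ℕ) : S3 := g n ^ 2 * X 1 - X 0 ^ (2 * n + 5)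

def syzU (n : ℕ) : Fin 3 → S3 :=
  ![0, C (-2 : ℂ) * X 1 ^ (n + 2), X 0 ^ (n + 2) + C (2 * n + 3 : ℂ) * (X 1 ^ (n + 1) * X 2)]

def syzV (n : ℕ) : Fin 3 → S3 :=
  ![C (2 : ℂ) * g n,
    C (4 * n + 10 : ℂ) * X 0 ^ (n + 2) - C (4 * n + 8 : ℂ) * (X 0 ^ (n + 1) * X 1)
      - C (2 * (2 * n + 3) * (2 * n + 5) : ℂ) * (X 1 ^ (n + 1) * X 2),
    C (4 * (n + 1) * (n + 2) : ℂ) * (X 0 ^ (n + 1) * X 2)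
      + C ((2 * n + 3) ^ 2 * (2 * n + 5) : ℂ) * (X 1 ^ n * X 2 ^ 2)]

variable (n : ℕ)

theorem g_isHomogeneous : (g n).IsHomogeneous (n + 2) :=
  ((isHomogeneous_X_pow _ _).mul (isHomogeneous_X _ _)).add (isHomogeneous_X_pow _ _)

theorem F_isHomogeneous : (F n).IsHomogeneous (2 * n + 5) := by
  have h := ((g_isHomogeneous n).pow 2).mul (isHomogeneous_X ℂ (1 : Fin 3))
  rw [show (n + 2) * 2 + 1 = 2 * n + 5 by ring] at h
  exact h.sub (isHomogeneous_X_pow _ _)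

theorem F_ne_zero : F n ≠ 0 := by
  intro h
  have := congrArg (eval fun _ => (1 : ℂ)) h
  norm_num [F, g] at this

theorem pderiv_zero_F : pderiv 0 (F n) =
    (2 * n + 4 : S3) * (X 0 ^ (n + 1) * X 1 * g n) - (2 * n + 5 : S3) * X 0 ^ (2 * n + 4) := by
  simp [F, g, pderiv_X]
  ring

theorem pderiv_one_F : pderiv 1 (F n) =
    g n * ((2 * n + 3 : S3) * (X 1 ^ (n + 1) * X 2) + X 0 ^ (n + 2)) := by
  simp [F, g, pderiv_X]
  ring

theorem pderiv_two_F : pderiv 2 (F n) = 2 * (X 1 ^ (n + 2) * g n) := by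
  simp [F, g, pderiv_X]
  ring

theorem pderiv_two_F_ne_zero : pderiv 2 (F n) ≠ 0 := by
  intro h
  have := congrArg (eval fun _ => (1 : ℂ)) h
  norm_num [pderiv_two_F, g] at this

theorem isRelPrime_F_pderiv_two : IsRelPrime (F n) (pderiv 2 (F n)) := by
  have hy : IsRelPrime (X 0 ^ (2 * n + 5)) (X 1 : S3) :=
    (isRelPrime_X_of_eval_ne_zero (x := ![0, 1, 1]) rfl (by simp)).pow_left
  have hg : IsRelPrime (X 0 ^ (2 * n + 5)) (g n) :=
    (isRelPrime_X_of_eval_ne_zero (x := ![0, 1, 1]) rfl (by simp [g])).pow_left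
  have htwo : IsUnit (2 : S3) := by
    rw [← map_ofNat C 2]
    exact (IsUnit.mk0 (2 : ℂ) two_ne_zero).map C
  rw [pderiv_two_F, isRelPrime_mul_unit_left_right htwo]
  exact ((hy.sub_left_of_dvd (dvd_mul_left _ _)).pow_right).mul_right
    (hg.sub_left_of_dvd (dvd_mul_of_dvd_left (dvd_pow_self _ two_ne_zero) _))

theorem syzU_mem_AR : syzU n ∈ AR (F n) := by
  rw [mem_AR_iff, pderiv_zero_F, pderiv_one_F, pderiv_two_F]
  simp [syzU, g, map_ofNat]
  ring

theorem syzV_mem_AR : syzV n ∈ AR (F n) := by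
  rw [mem_AR_iff, pderiv_zero_F, pderiv_one_F, pderiv_two_F]
  simp [syzV, g, map_ofNat]
  ring

theorem isHomogVec_syzU : IsHomogVec (syzU n) (n + 2) := by
  intro i
  fin_cases i
  · exact isHomogeneous_zero _ _ _
  · exact (isHomogeneous_X_pow _ _).C_mul _
  · exact (isHomogeneous_X_pow _ _).add
      (((isHomogeneous_X_pow _ _).mul (isHomogeneous_X _ _)).C_mul _)

theorem isHomogVec_syzV : IsHomogVec (syzV n) (n + 2) := by
  intro i
  fin_cases i
  · exact (g_isHomogeneous n).C_mul _
  · exact (((isHomogeneous_X_pow _ _).C_mul _).sub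
      (((isHomogeneous_X_pow _ _).mul (isHomogeneous_X _ _)).C_mul _)).sub
      (((isHomogeneous_X_pow _ _).mul (isHomogeneous_X _ _)).C_mul _)
  · exact (((isHomogeneous_X_pow _ _).mul (isHomogeneous_X _ _)).C_mul _).add
      (((isHomogeneous_X_pow _ _).mul (isHomogeneous_X_pow _ 2)).C_mul _)

theorem det_syzU_syzV : (Matrix.of ![syzU n, syzV n, X]).det = C (4 * n + 10 : ℂ) * F n := by
  simp [Matrix.det_fin_three, syzU, syzV, F, g, map_ofNat]
  ring

theorem isFreeDivisorWith_F : IsFreeDivisorWith (F n) (n + 2) (n + 2) :=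
  isFreeDivisorWith_of_det (F_isHomogeneous n) (F_ne_zero n) (isRelPrime_F_pderiv_two n)
    (pderiv_two_F_ne_zero n) (syzU_mem_AR n) (syzV_mem_AR n) (isHomogVec_syzU n)
    (isHomogVec_syzV n) ((IsUnit.mk0 (4 * n + 10 : ℂ) (by norm_cast)).map C) (det_syzU_syzV n)

end CurveC

theorem stmt15 (k : ℕ) (hk : 2 ≤ k) :
    ∃ N : ℕ, ∀ m ≥ N,
      milnorDim ((X 1 ^ (k - 1) * X 2 + X 0 ^ k) ^ 2 * X 1 - X 0 ^ (2 * k + 1) : S3) m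
        = 3 * k ^ 2 := by
  obtain ⟨n, rfl⟩ : ∃ n, k = n + 2 := ⟨k - 2, by omega⟩
  have hF : (CurveC.F n).IsHomogeneous (n + 2 + (n + 2) + 1) := by
    convert CurveC.F_isHomogeneous n using 1
    ring
  refine ⟨3 * (n + 2), fun m hm => ?_⟩
  rw [show n + 2 - 1 = n + 1 by omega, show 2 * (n + 2) + 1 = 2 * n + 5 by ring]
  change milnorDim (CurveC.F n) m = _
  rw [(CurveC.isFreeDivisorWith_F n).milnorDim_eq hF (by omega) (by omega)]
  ring

end
end
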